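/- arXiv:1807.06169 — 2 statements merged into one kernel-verified Lean document; each statement's English description precedes it below -/
import Mathlib

section
/- Let A be an abelian category with stability function Z as above, and suppose a nonzero object E admits two Harder–Narasimhan filtrations, i.e. finite filtrations 0 = E₀ ⊂ E₁ ⊂ ... ⊂ E_n = E with semistable quotients F_i = E_i/E_{i-1} of strictly decreasing phases. Then the two filtrations coincide (have the same length and the same subobjects). -/
open CategoryTheory Limits

/-- The semiclosed upper half-plane `{ρ·exp(iπφ) : ρ > 0, 0 < φ ≤ 1}`. -/
def upperH : Set ℂ := {z | 0 < z.im ∨ (z.im = 0 ∧ z.re < 0)}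

/-- The phase `φ(z) = (1/π)·arg z`, normalized to lie in `(0,1]` for `z ∈ H`. -/
noncomputable def phase (z : ℂ) : ℝ := Complex.arg z / Real.pi

/-- `Z` is a stability function: additive on short exact sequences and sending
nonzero objects into the semiclosed upper half-plane. -/
def IsStabilityFunction {C : Type*} [Category C] [Abelian C] (Z : C → ℂ) : Prop :=
  (∀ S : ShortComplex C, S.ShortExact → Z S.X₂ = Z S.X₁ + Z S.X₃) ∧
  (∀ X : C, ¬ IsZero X → Z X ∈ upperH)

/-- A nonzero object `E` is semistable if every nonzero subobject has phase at
most the phase of `E`. -/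
def Semistable {C : Type*} [Category C] [Abelian C] (Z : C → ℂ) (E : C) : Prop :=
  ¬ IsZero E ∧
    ∀ (F : C) (f : F ⟶ E), Mono f → ¬ IsZero F → phase (Z F) ≤ phase (Z E)

/-- The `i`-th graded factor `s(i+1)/s(i)` of a monotone chain of subobjects of `E`. -/
noncomputable def quotObj {C : Type*} [Category C] [Abelian C] {E : C} {n : ℕ}
    (s : Fin (n + 1) → Subobject E) (hs : Monotone s) (i : Fin n) : C :=
  cokernel (Subobject.ofLE (s i.castSucc) (s i.succ) (hs (Fin.castSucc_lt_succ : i.castSucc < i.succ).le))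

/-!
Both filtrations are compared step by step. Suppose `s i = t i`. A nonzero morphism between
semistable objects cannot decrease the phase, so if the next `t`-factor has phase at most that of
the next `s`-factor `F`, the map from `F` into every later `t`-factor vanishes, and descending along
`t` shows `s (i+1) ≤ t (i+1)`. Semistability of the `t`-factor then forces equality of the two
phases, hence both inclusions, and `s (i+1) = t (i+1)`. Once the subobjects agree, the lengths
agree because both filtrations reach `⊤` and are strictly increasing.
-/

lemma ne_zero_of_mem_upperH {z : ℂ} (hz : z ∈ upperH) : z ≠ 0 := by
  rintro rfl
  simp [upperH] at hz

lemma add_mem_upperH {z w : ℂ} (hz : z ∈ upperH) (hw : w ∈ upperH) : z + w ∈ upperH := by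
  simp only [upperH, Set.mem_ofPred, Complex.add_im, Complex.add_re] at hz hw ⊢
  rcases hz with hz | ⟨hz, hz'⟩ <;> rcases hw with hw | ⟨hw, hw'⟩
  all_goals first | (left; linarith) | (right; constructor <;> linarith)

lemma arg_pos_of_mem_upperH {z : ℂ} (hz : z ∈ upperH) : 0 < Complex.arg z := by
  rcases hz with him | ⟨him, hre⟩
  · refine (Complex.arg_nonneg_iff.2 him.le).lt_of_ne fun h ↦ ?_
    exact him.ne' (Complex.arg_eq_zero_iff.1 h.symm).2
  · rw [Complex.arg_eq_pi_iff.2 ⟨hre, him⟩]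
    exact Real.pi_pos

lemma re_mul_im_sub_im_mul_re_eq (z w : ℂ) :
    z.re * w.im - z.im * w.re = ‖z‖ * ‖w‖ * Real.sin (Complex.arg w - Complex.arg z) := by
  rw [Real.sin_sub, ← Complex.norm_mul_cos_arg z, ← Complex.norm_mul_sin_arg z,
    ← Complex.norm_mul_cos_arg w, ← Complex.norm_mul_sin_arg w]
  ring

lemma phase_lt_phase_iff {z w : ℂ} (hz : z ∈ upperH) (hw : w ∈ upperH) :
    phase z < phase w ↔ z.im * w.re < z.re * w.im := by
  have hnorm : 0 < ‖z‖ * ‖w‖ :=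
    mul_pos (norm_pos_iff.2 (ne_zero_of_mem_upperH hz)) (norm_pos_iff.2 (ne_zero_of_mem_upperH hw))
  have hz₀ := arg_pos_of_mem_upperH hz
  have hw₀ := arg_pos_of_mem_upperH hw
  have hzπ := Complex.arg_le_pi z
  have hwπ := Complex.arg_le_pi w
  rw [phase, phase, div_lt_div_iff_of_pos_right Real.pi_pos, ← sub_pos, ← sub_pos (a := _ * _),
    re_mul_im_sub_im_mul_re_eq, mul_pos_iff_of_pos_left hnorm]
  constructor
  · intro h
    exact Real.sin_pos_of_pos_of_lt_pi (by linarith) (by linarith)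
  · intro h
    by_contra! hle
    exact h.not_ge (Real.sin_nonpos_of_nonpos_of_neg_pi_le (by linarith) (by linarith))

lemma phase_le_phase_iff {z w : ℂ} (hz : z ∈ upperH) (hw : w ∈ upperH) :
    phase z ≤ phase w ↔ z.im * w.re ≤ z.re * w.im := by
  rw [← not_lt, phase_lt_phase_iff hw hz, not_lt]
  constructor <;> intro h <;> linarith

/-- The see-saw property. -/
lemma phase_add_le_of_phase_le_phase_add {z w : ℂ} (hz : z ∈ upperH) (hw : w ∈ upperH)
    (h : phase z ≤ phase (z + w)) : phase (z + w) ≤ phase w := by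
  have hzw := add_mem_upperH hz hw
  rw [phase_le_phase_iff hz hzw] at h
  rw [phase_le_phase_iff hzw hw]
  simp only [Complex.add_re, Complex.add_im] at h ⊢
  linarith

section

variable {C : Type*} [Category C] [Abelian C] {Z : C → ℂ}

lemma IsStabilityFunction.eq_zero_of_isZero (hZ : IsStabilityFunction Z) {X : C}
    (hX : IsZero X) : Z X = 0 := by
  let S : ShortComplex C := ShortComplex.mk (𝟙 X) (𝟙 X) (hX.eq_of_src _ _)
  have := hZ.1 S ⟨S.exact_of_isZero_X₂ hX⟩
  rwa [left_eq_add] at this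

lemma Semistable.phase_le_of_ne_zero (hZ : IsStabilityFunction Z) {A B : C}
    (hA : Semistable Z A) (hB : Semistable Z B) {f : A ⟶ B} (hf : f ≠ 0) :
    phase (Z A) ≤ phase (Z B) := by
  set p := Abelian.factorThruImage f
  have hI : ¬ IsZero (Abelian.image f) := fun h ↦
    hf (by rw [← Abelian.image.fac f, h.eq_of_src (Abelian.image.ι f) 0, comp_zero])
  have hIB : phase (Z (Abelian.image f)) ≤ phase (Z B) :=
    hB.2 _ (Abelian.image.ι f) inferInstance hI
  let S : ShortComplex C := ShortComplex.mk (kernel.ι p) p (kernel.condition p)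
  have hA_eq : Z A = Z (kernel p) + Z (Abelian.image f) :=
    hZ.1 S ⟨S.exact_of_f_is_kernel (kernelIsKernel p)⟩
  by_cases hK : IsZero (kernel p)
  · rwa [hA_eq, hZ.eq_zero_of_isZero hK, zero_add]
  · have hKA : phase (Z (kernel p)) ≤ phase (Z A) := hA.2 _ (kernel.ι p) inferInstance hK
    rw [hA_eq] at hKA ⊢
    exact (phase_add_le_of_phase_le_phase_add (hZ.2 _ hK) (hZ.2 _ hI) hKA).trans hIB

namespace CategoryTheory.Subobject

variable {E : C}

lemma mono_cokernel_map_ofLE {A B Y : Subobject E} (hAB : A ≤ B) (hBY : B ≤ Y) :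
    Mono (cokernel.map (ofLE A B hAB) (ofLE A Y (hAB.trans hBY)) (𝟙 _) (ofLE B Y hBY)
      (by simp)) :=
  Abelian.mono_cokernel_map_of_isPullback (IsPullback.of_vert_isIso_mono ⟨by simp⟩)

lemma le_of_cokernel_map_ofLE_eq_zero {A B X Y : Subobject E} (hAB : A ≤ B) (hXY : X ≤ Y)
    (hAX : A ≤ X) (hBY : B ≤ Y)
    (h : cokernel.map (ofLE A B hAB) (ofLE X Y hXY) (ofLE A X hAX) (ofLE B Y hBY) (by simp) = 0) :
    B ≤ X := by
  have hπ : ofLE B Y hBY ≫ cokernel.π (ofLE X Y hXY) = 0 := by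
    rw [← cokernel.π_desc (ofLE A B hAB) (ofLE B Y hBY ≫ cokernel.π (ofLE X Y hXY))]
    exact (congrArg (cokernel.π _ ≫ ·) h).trans comp_zero
  refine le_of_comm (Abelian.monoLift _ _ hπ) ?_
  rw [← ofLE_arrow hXY, ← Category.assoc, Abelian.monoLift_comp, ofLE_arrow]

end CategoryTheory.Subobject

lemma Semistable.phase_le_of_le {E : C} {A B Y : Subobject E} (hAB : A ≤ B)
    (hBY : B ≤ Y) (hB : ¬ IsZero (cokernel (Subobject.ofLE A B hAB)))
    (hY : Semistable Z (cokernel (Subobject.ofLE A Y (hAB.trans hBY)))) :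
    phase (Z (cokernel (Subobject.ofLE A B hAB)))
      ≤ phase (Z (cokernel (Subobject.ofLE A Y (hAB.trans hBY)))) :=
  hY.2 _ _ (Subobject.mono_cokernel_map_ofLE hAB hBY) hB

lemma quotObj_eq_cokernel {E : C} {n : ℕ} {s : Fin (n + 1) → Subobject E} (hs : Monotone s)
    (i : Fin n) {A : Subobject E} (hA : s i.castSucc = A) :
    quotObj s hs i =
      cokernel (Subobject.ofLE A (s i.succ) (hA ▸ hs (Fin.castSucc_le_succ i))) := by
  subst hA
  rfl

/-- The chain `s` need not start at `⊥`: it is then a Harder–Narasimhan filtration of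
`E / s 0`. -/
structure IsHNFiltration (Z : C → ℂ) {E : C} {n : ℕ} (s : Fin (n + 1) → Subobject E) :
    Prop where
  monotone : Monotone s
  last_eq_top : s (Fin.last n) = ⊤
  semistable : ∀ i, Semistable Z (quotObj s monotone i)
  phase_lt : ∀ i j, i < j → phase (Z (quotObj s monotone j)) < phase (Z (quotObj s monotone i))

namespace IsHNFiltration

variable {E : C} {n m : ℕ} {s : Fin (n + 1) → Subobject E} {t : Fin (m + 1) → Subobject E}

lemma le_of_phase_lt (hZ : IsStabilityFunction Z) (ht : IsHNFiltration Z t)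
    {A B : Subobject E} (hAB : A ≤ B) (hF : Semistable Z (cokernel (Subobject.ofLE A B hAB)))
    (k : Fin (m + 1)) (hA : A ≤ t k)
    (hφ : ∀ j : Fin m, k ≤ j.castSucc →
      phase (Z (quotObj t ht.monotone j)) < phase (Z (cokernel (Subobject.ofLE A B hAB)))) :
    B ≤ t k := by
  induction k using Fin.reverseInduction with
  | last => exact ht.last_eq_top ▸ le_top
  | cast j ih =>
    have hB : B ≤ t j.succ :=
      ih (hA.trans (ht.monotone (Fin.castSucc_le_succ _)))
        (fun j' hj' ↦ hφ j' ((Fin.castSucc_le_succ _).trans hj'))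
    refine Subobject.le_of_cokernel_map_ofLE_eq_zero hAB (ht.monotone (Fin.castSucc_le_succ j))
      hA hB ?_
    by_contra hne
    exact (hφ j le_rfl).not_ge (hF.phase_le_of_ne_zero hZ (ht.semistable j) hne)

lemma succ_le_succ_of_phase_le (hZ : IsStabilityFunction Z) (hs : IsHNFiltration Z s)
    (ht : IsHNFiltration Z t) {i : Fin n} {j : Fin m} (hij : s i.castSucc = t j.castSucc)
    (hφ : phase (Z (quotObj t ht.monotone j)) ≤ phase (Z (quotObj s hs.monotone i))) :
    s i.succ ≤ t j.succ := by
  refine ht.le_of_phase_lt hZ (hs.monotone (Fin.castSucc_le_succ _)) (hs.semistable i) j.succ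
    (hij ▸ ht.monotone (Fin.castSucc_le_succ _)) fun j' hj' ↦ ?_
  exact (ht.phase_lt j j' (Fin.succ_le_castSucc_iff.1 hj')).trans_le hφ

lemma phase_le_of_succ_le_succ (hs : IsHNFiltration Z s) (ht : IsHNFiltration Z t)
    {i : Fin n} {j : Fin m} (hij : s i.castSucc = t j.castSucc) (hle : s i.succ ≤ t j.succ) :
    phase (Z (quotObj s hs.monotone i)) ≤ phase (Z (quotObj t ht.monotone j)) := by
  have hA : t j.castSucc ≤ s i.succ := hij ▸ hs.monotone (Fin.castSucc_le_succ _)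
  rw [quotObj_eq_cokernel hs.monotone i hij, quotObj_eq_cokernel ht.monotone j rfl]
  refine Semistable.phase_le_of_le hA hle ?_ ?_
  · exact quotObj_eq_cokernel hs.monotone i hij ▸ (hs.semistable i).1
  · exact ht.semistable j

lemma succ_eq_succ (hZ : IsStabilityFunction Z) (hs : IsHNFiltration Z s)
    (ht : IsHNFiltration Z t) {i : Fin n} {j : Fin m} (hij : s i.castSucc = t j.castSucc) :
    s i.succ = t j.succ := by
  have hφ : phase (Z (quotObj s hs.monotone i)) = phase (Z (quotObj t ht.monotone j)) := by
    rcases le_total (phase (Z (quotObj t ht.monotone j))) (phase (Z (quotObj s hs.monotone i)))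
      with h | h
    · exact le_antisymm
        (hs.phase_le_of_succ_le_succ ht hij (succ_le_succ_of_phase_le hZ hs ht hij h)) h
    · exact le_antisymm h
        (ht.phase_le_of_succ_le_succ hs hij.symm (succ_le_succ_of_phase_le hZ ht hs hij.symm h))
  exact le_antisymm (succ_le_succ_of_phase_le hZ hs ht hij hφ.ge)
    (succ_le_succ_of_phase_le hZ ht hs hij.symm hφ.le)

lemma eq_of_zero_eq (hZ : IsStabilityFunction Z) (hs : IsHNFiltration Z s)
    (ht : IsHNFiltration Z t) (h₀ : s 0 = t 0) :
    ∀ (i : ℕ) (hi : i < n + 1) (hj : i < m + 1), s ⟨i, hi⟩ = t ⟨i, hj⟩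
  | 0, _, _ => h₀
  | i + 1, hi, hj =>
    succ_eq_succ (i := ⟨i, by omega⟩) (j := ⟨i, by omega⟩) hZ hs ht
      (eq_of_zero_eq hZ hs ht h₀ i _ _)

lemma length_eq_of_zero_eq (hZ : IsStabilityFunction Z) (hs : IsHNFiltration Z s)
    (ht : IsHNFiltration Z t) (hsi : Function.Injective s) (hti : Function.Injective t)
    (h₀ : s 0 = t 0) : n = m := by
  have heq := eq_of_zero_eq hZ hs ht h₀
  have htop : s (Fin.last n) = t (Fin.last m) := hs.last_eq_top.trans ht.last_eq_top.symm
  rcases le_total n m with h | h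
  · exact congrArg Fin.val (hti ((heq n (by omega) (by omega)).symm.trans htop))
  · exact (congrArg Fin.val (hsi ((heq m (by omega) (by omega)).trans htop.symm))).symm

end IsHNFiltration

end

theorem stmt9_general {C : Type*} [Category C] [Abelian C] (Z : C → ℂ)
    (hZ : IsStabilityFunction Z)
    {E : C} {n m : ℕ}
    (s : Fin (n + 1) → Subobject E) (t : Fin (m + 1) → Subobject E)
    (hs : StrictMono s) (ht : StrictMono t)
    (hs0 : s 0 = ⊥) (hsl : s (Fin.last n) = ⊤)
    (ht0 : t 0 = ⊥) (htl : t (Fin.last m) = ⊤)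
    (hsss : ∀ i : Fin n, Semistable Z (quotObj s hs.monotone i))
    (htss : ∀ i : Fin m, Semistable Z (quotObj t ht.monotone i))
    (hsdec : ∀ i j : Fin n, i < j →
      phase (Z (quotObj s hs.monotone j)) < phase (Z (quotObj s hs.monotone i)))
    (htdec : ∀ i j : Fin m, i < j →
      phase (Z (quotObj t ht.monotone j)) < phase (Z (quotObj t ht.monotone i))) :
    n = m ∧ ∀ (i : ℕ) (hi : i < n + 1) (hj : i < m + 1), s ⟨i, hi⟩ = t ⟨i, hj⟩ := by
  have hsHN : IsHNFiltration Z s := ⟨hs.monotone, hsl, hsss, hsdec⟩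
  have htHN : IsHNFiltration Z t := ⟨ht.monotone, htl, htss, htdec⟩
  have h₀ : s 0 = t 0 := hs0.trans ht0.symm
  exact ⟨hsHN.length_eq_of_zero_eq hZ htHN hs.injective ht.injective h₀,
    hsHN.eq_of_zero_eq hZ htHN h₀⟩

/-- Uniqueness of Harder–Narasimhan filtrations: two finite filtrations of a
nonzero object `E` by subobjects, starting at `⊥`, ending at `⊤`, strictly
increasing, with semistable factors of strictly decreasing phases, coincide:
they have the same length and the same subobjects. -/
theorem stmt9 {C : Type*} [Category C] [Abelian C] (Z : C → ℂ)
    (hZ : IsStabilityFunction Z)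
    {E : C} (hE : ¬ IsZero E) {n m : ℕ}
    (s : Fin (n + 1) → Subobject E) (t : Fin (m + 1) → Subobject E)
    (hs : StrictMono s) (ht : StrictMono t)
    (hs0 : s 0 = ⊥) (hsl : s (Fin.last n) = ⊤)
    (ht0 : t 0 = ⊥) (htl : t (Fin.last m) = ⊤)
    (hsss : ∀ i : Fin n, Semistable Z (quotObj s hs.monotone i))
    (htss : ∀ i : Fin m, Semistable Z (quotObj t ht.monotone i))
    (hsdec : ∀ i j : Fin n, i < j →
      phase (Z (quotObj s hs.monotone j)) < phase (Z (quotObj s hs.monotone i)))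
    (htdec : ∀ i j : Fin m, i < j →
      phase (Z (quotObj t ht.monotone j)) < phase (Z (quotObj t ht.monotone i))) :
    n = m ∧ ∀ (i : ℕ) (hi : i < n + 1) (hj : i < m + 1), s ⟨i, hi⟩ = t ⟨i, hj⟩ :=
  stmt9_general Z hZ s t hs ht hs0 hsl ht0 htl hsss htss hsdec htdec
end

section
/- Let D be a k-linear Hom-finite triangulated category and E ∈ D an exceptional object (Hom(E,E) = k and Hom(E,E[p]) = 0 for p ≠ 0). For any C ∈ D, complete the evaluation morphism ⊕_k Hom(E,C[k]) ⊗ E[-k] → C to a distinguished triangle with third vertex D. Then Hom(E, D[p]) = 0 for all p ∈ ℤ, i.e. D lies in the right orthogonal ⟨E⟩^⊥. -/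
/-!
Write `H^q(X)` for `Hom(E, X⟦q⟧)`. Since `E` is exceptional, `H^q(E⟦-k⟧)` vanishes for `k ≠ q`
and is spanned by the isomorphism `E ≅ E⟦-q⟧⟦q⟧` for `k = q`. Hence `H^q` of the evaluation
morphism sends a morphism with coordinates `cᵢ` to `∑ cᵢ • bᵢ`, and is bijective because the `bᵢ`
form a basis of `H^q(C)`. The long exact `H`-sequence of the triangle then forces `H^p(Dd) = 0`.
-/

open CategoryTheory Limits Pretriangulated

namespace CategoryTheory

lemma Functor.eq_sum_comp_map_biproduct_π_comp_map_ι {C C' : Type*} [Category C] [Category C']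
    [Preadditive C] [Preadditive C'] (G : C ⥤ C') [G.Additive] {J : Type} [Fintype J]
    {f : J → C} [HasBiproduct f] {X : C'} (φ : X ⟶ G.obj (⨁ f)) :
    φ = ∑ j, (φ ≫ G.map (biproduct.π f j)) ≫ G.map (biproduct.ι f j) := by
  conv_lhs => rw [← Category.comp_id φ, ← G.map_id, ← biproduct.total, G.map_sum]
  simp only [Preadditive.comp_sum, G.map_comp, Category.assoc]

lemma shiftFunctorCompIsoId_inv_app_comp_shift_map_shift_map_comp_hom_app {D : Type*}
    [Category D] [HasShift D ℤ] (k : ℤ) {X Y : D} (β : X ⟶ Y⟦k⟧) :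
    (shiftFunctorCompIsoId D (-k) k (neg_add_cancel k)).inv.app X ≫
      (β⟦-k⟧' ≫ (shiftFunctorCompIsoId D k (-k) (add_neg_cancel k)).hom.app Y)⟦k⟧' = β :=
  (Adjunction.homEquiv_unit _ _ _ _).symm.trans
    (((shiftEquiv D k).symm.toAdjunction.homEquiv X Y).apply_symm_apply β)

section Exceptional

variable {𝕜 : Type*} [Field 𝕜] {D : Type*} [Category D] [Preadditive D] [Linear 𝕜 D]

lemma exists_eq_smul_hom_of_finrank_eq_one {E X : D}
    (hE : Module.finrank 𝕜 (E ⟶ E) = 1) (e : E ≅ X) (f : E ⟶ X) : ∃ c : 𝕜, f = c • e.hom := by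
  have hid : 𝟙 E ≠ 0 := fun h => by
    have : Subsingleton (E ⟶ E) := ⟨((IsZero.iff_id_eq_zero E).2 h).eq_of_src⟩
    simp [Module.finrank_zero_of_subsingleton] at hE
  obtain ⟨c, hc⟩ := (finrank_eq_one_iff_of_nonzero' _ hid).1 hE (f ≫ e.inv)
  exact ⟨c, by rw [← Category.id_comp e.hom, ← Linear.smul_comp, hc]; simp⟩

variable [HasShift D ℤ]

lemma eq_zero_of_shift_shift_ne {E : D}
    (hE : ∀ p : ℤ, p ≠ 0 → ∀ f : E ⟶ E⟦p⟧, f = 0) {k q : ℤ} (hkq : k ≠ q)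
    (f : E ⟶ E⟦-k⟧⟦q⟧) : f = 0 := by
  let e := (shiftFunctorAdd' D (-k) q (q - k) (by ring)).app E
  rw [← cancel_mono e.inv, hE (q - k) (sub_ne_zero.2 hkq.symm) (f ≫ e.inv), zero_comp]

variable [HasFiniteBiproducts D] (E : D) {K : Finset ℤ} (J : K → Type) [∀ k, Fintype (J k)]

abbrev shiftCopies (j : Σ k : K, J k) : D := E⟦-(j.1 : ℤ)⟧

variable {E J} {C : D} (v : ∀ k : K, J k → (E ⟶ C⟦(k : ℤ)⟧))

noncomputable def shiftCopiesEval : ⨁ shiftCopies E J ⟶ C :=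
  biproduct.desc fun j => (v j.1 j.2)⟦-(j.1 : ℤ)⟧' ≫
    (shiftFunctorCompIsoId D (j.1 : ℤ) (-(j.1 : ℤ)) (add_neg_cancel _)).hom.app C

lemma shiftFunctorCompIsoId_inv_app_comp_shift_map_ι_shiftCopiesEval (k : K) (i : J k) :
    (shiftFunctorCompIsoId D (-(k : ℤ)) k (neg_add_cancel _)).inv.app E ≫
      (biproduct.ι (shiftCopies E J) ⟨k, i⟩ ≫ shiftCopiesEval v)⟦(k : ℤ)⟧' =
      v k i := by
  rw [shiftCopiesEval, biproduct.ι_desc]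
  exact shiftFunctorCompIsoId_inv_app_comp_shift_map_shift_map_comp_hom_app _ _

lemma exists_comp_shift_map_shiftCopiesEval_eq
    (hC : ∀ q : ℤ, q ∉ K → ∀ f : E ⟶ C⟦q⟧, f = 0)
    (hv : ∀ k, Submodule.span 𝕜 (Set.range (v k)) = ⊤) (q : ℤ) (χ : E ⟶ C⟦q⟧) :
    ∃ ψ : E ⟶ (⨁ shiftCopies E J)⟦q⟧, ψ ≫ (shiftCopiesEval v)⟦q⟧' = χ := by
  by_cases hq : q ∈ K
  · obtain ⟨k, rfl⟩ : ∃ k : K, (k : ℤ) = q := ⟨⟨q, hq⟩, rfl⟩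
    obtain ⟨c, hc⟩ := (Submodule.mem_span_range_iff_exists_fun 𝕜).1
      (by rw [hv k]; trivial : χ ∈ Submodule.span 𝕜 (Set.range (v k)))
    refine ⟨∑ i, c i • ((shiftFunctorCompIsoId D (-(k : ℤ)) k (neg_add_cancel _)).inv.app E ≫
      (biproduct.ι (shiftCopies E J) ⟨k, i⟩)⟦(k : ℤ)⟧'), ?_⟩
    simp only [Preadditive.sum_comp, Linear.smul_comp, Category.assoc, ← Functor.map_comp,
      shiftFunctorCompIsoId_inv_app_comp_shift_map_ι_shiftCopiesEval, hc]
  · exact ⟨0, by rw [hC q hq χ, zero_comp]⟩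

variable [∀ n : ℤ, (shiftFunctor D n).Additive]

lemma comp_shift_map_shiftCopiesEval_eq_sum (hE : ∀ p : ℤ, p ≠ 0 → ∀ f : E ⟶ E⟦p⟧, f = 0)
    (k : K) (ψ : E ⟶ (⨁ shiftCopies E J)⟦(k : ℤ)⟧) (c : J k → 𝕜)
    (hc : ∀ i, ψ ≫ (biproduct.π (shiftCopies E J) ⟨k, i⟩)⟦(k : ℤ)⟧' =
      c i • (shiftFunctorCompIsoId D (-(k : ℤ)) k (neg_add_cancel _)).inv.app E) :
    ψ ≫ (shiftCopiesEval v)⟦(k : ℤ)⟧' = ∑ i, c i • v k i := by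
  have hoff : ∀ j : Σ k : K, J k, j.1 ≠ k →
      ψ ≫ (biproduct.π (shiftCopies E J) j)⟦(k : ℤ)⟧' = 0 :=
    fun j hj => eq_zero_of_shift_shift_ne hE (Subtype.coe_injective.ne hj) _
  calc ψ ≫ (shiftCopiesEval v)⟦(k : ℤ)⟧'
      = ∑ j : Σ k : K, J k, (ψ ≫ (biproduct.π (shiftCopies E J) j)⟦(k : ℤ)⟧') ≫
          (biproduct.ι (shiftCopies E J) j ≫ shiftCopiesEval v)⟦(k : ℤ)⟧' := by
        conv_lhs => rw [(shiftFunctor D (k : ℤ)).eq_sum_comp_map_biproduct_π_comp_map_ι ψ]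
        simp only [Preadditive.sum_comp, Functor.map_comp, Category.assoc]
    _ = ∑ i, (ψ ≫ (biproduct.π (shiftCopies E J) ⟨k, i⟩)⟦(k : ℤ)⟧') ≫
          (biproduct.ι (shiftCopies E J) ⟨k, i⟩ ≫ shiftCopiesEval v)⟦(k : ℤ)⟧' := by
        rw [Fintype.sum_sigma, Fintype.sum_eq_single k]
        intro k' hk'
        exact Finset.sum_eq_zero fun i _ => by rw [hoff ⟨k', i⟩ hk', zero_comp]
    _ = ∑ i, c i • v k i := by
        simp only [hc, Linear.smul_comp,
          shiftFunctorCompIsoId_inv_app_comp_shift_map_ι_shiftCopiesEval]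

lemma eq_zero_of_comp_shift_map_shiftCopiesEval_eq_zero
    (hE₀ : Module.finrank 𝕜 (E ⟶ E) = 1) (hE : ∀ p : ℤ, p ≠ 0 → ∀ f : E ⟶ E⟦p⟧, f = 0)
    (hv : ∀ k, LinearIndependent 𝕜 (v k)) (q : ℤ) (ψ : E ⟶ (⨁ shiftCopies E J)⟦q⟧)
    (hψ : ψ ≫ (shiftCopiesEval v)⟦q⟧' = 0) : ψ = 0 := by
  rw [(shiftFunctor D q).eq_sum_comp_map_biproduct_π_comp_map_ι ψ]
  refine Finset.sum_eq_zero fun ⟨k, i⟩ _ => ?_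
  suffices ψ ≫ (biproduct.π (shiftCopies E J) ⟨k, i⟩)⟦q⟧' = 0 by rw [this, zero_comp]
  by_cases hkq : (k : ℤ) = q
  · subst hkq
    choose c hc using fun i => exists_eq_smul_hom_of_finrank_eq_one hE₀
      ((shiftFunctorCompIsoId D (-(k : ℤ)) k (neg_add_cancel _)).symm.app E)
      (ψ ≫ (biproduct.π (shiftCopies E J) ⟨k, i⟩)⟦(k : ℤ)⟧')
    have hc0 := Fintype.linearIndependent_iff.1 (hv k) c
      (by rw [← comp_shift_map_shiftCopiesEval_eq_sum v hE k ψ c hc, hψ])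
    rw [hc i, hc0 i, zero_smul]
  · exact eq_zero_of_shift_shift_ne hE hkq _

end Exceptional

namespace Pretriangulated

variable {C : Type*} [Category C] [Preadditive C] [HasZeroObject C] [HasShift C ℤ]
  [∀ n : ℤ, (shiftFunctor C n).Additive] [Pretriangulated C]

lemma eq_zero_of_hom_shift_obj₃ (T : Triangle C) (hT : T ∈ distTriang C) {E : C} (p : ℤ)
    (hsurj : ∀ χ : E ⟶ T.obj₂⟦p⟧, ∃ ψ : E ⟶ T.obj₁⟦p⟧, ψ ≫ T.mor₁⟦p⟧' = χ)
    (hinj : ∀ ψ : E ⟶ T.obj₁⟦p + 1⟧, ψ ≫ T.mor₁⟦p + 1⟧' = 0 → ψ = 0)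
    (φ : E ⟶ T.obj₃⟦p⟧) : φ = 0 := by
  let F := preadditiveCoyoneda.obj (Opposite.op E)
  have : Epi ((F.shift p).map T.mor₁) := (AddCommGrpCat.epi_iff_surjective _).2 hsurj
  have : Mono ((F.shift (p + 1)).map T.mor₁) :=
    (AddCommGrpCat.mono_iff_injective _).2 ((injective_iff_map_eq_zero _).2 hinj)
  have hzero : IsZero ((F.shift p).obj T.obj₃) :=
    (F.homologySequence_exact₃ T hT p (p + 1) rfl).isZero_X₂
      ((F.homologySequence_epi_shift_map_mor₁_iff T hT p).1 inferInstance)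
      ((F.homologySequence_mono_shift_map_mor₁_iff T hT p (p + 1) rfl).1 inferInstance)
  exact (AddCommGrpCat.isZero_iff_subsingleton.1 hzero).elim φ 0

end Pretriangulated

end CategoryTheory

/-- Let `D` be a `𝕜`-linear Hom-finite triangulated category (with finite
biproducts) and `E` an exceptional object: `Hom(E,E) = 𝕜` and
`Hom(E,E[p]) = 0` for `p ≠ 0`. For `C : D`, the (finite) graded Hom
`⊕ₖ Hom(E,C[k])` is encoded by a finite support set `K`, dimensions `d k` and
bases `b k` of `Hom(E, C[k])`. Completing the evaluation morphism
`⊕ₖ Hom(E,C[k]) ⊗ E[-k] ⟶ C` to a distinguished triangle with third vertex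
`Dd`, one has `Hom(E, Dd[p]) = 0` for all `p`, i.e. `Dd` lies in the right
orthogonal `⟨E⟩^⊥`. -/
theorem stmt19 (𝕜 : Type*) [Field 𝕜] {D : Type*} [Category D] [Preadditive D]
    [Linear 𝕜 D] [HasZeroObject D] [HasShift D ℤ]
    [∀ n : ℤ, (shiftFunctor D n).Additive] [Pretriangulated D]
    [HasFiniteBiproducts D]
    [∀ X Y : D, FiniteDimensional 𝕜 (X ⟶ Y)]
    (E : D)
    (hexc₀ : Module.finrank 𝕜 (E ⟶ E) = 1)
    (hexcp : ∀ p : ℤ, p ≠ 0 → ∀ f : E ⟶ (shiftFunctor D p).obj E, f = 0)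
    (C : D) (K : Finset ℤ) (d : ℤ → ℕ)
    (hK : ∀ k : ℤ, k ∉ K → ∀ f : E ⟶ (shiftFunctor D k).obj C, f = 0)
    (b : ∀ k : K, Module.Basis (Fin (d (k : ℤ))) 𝕜 (E ⟶ (shiftFunctor D (k : ℤ)).obj C)) :
    let A : D := ⨁ fun j : (Σ k : K, Fin (d (k : ℤ))) =>
      (shiftFunctor D (-(j.1 : ℤ))).obj E
    let ev : A ⟶ C := biproduct.desc fun j =>
      (shiftFunctor D (-(j.1 : ℤ))).map (b j.1 j.2) ≫
        (shiftFunctorCompIsoId D (j.1 : ℤ) (-(j.1 : ℤ)) (by ring)).hom.app C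
    ∀ (Dd : D) (g : C ⟶ Dd) (h : Dd ⟶ (shiftFunctor D (1 : ℤ)).obj A),
      (Triangle.mk ev g h ∈ distTriang D) →
      ∀ (p : ℤ) (φ : E ⟶ (shiftFunctor D p).obj Dd), φ = 0 := by
  intro A ev Dd g h hT p φ
  exact eq_zero_of_hom_shift_obj₃ (Triangle.mk (shiftCopiesEval (fun k => b k)) g h) hT p
    (exists_comp_shift_map_shiftCopiesEval_eq _ hK (fun k => (b k).span_eq) p)
    (eq_zero_of_comp_shift_map_shiftCopiesEval_eq_zero _ hexc₀ hexcp
      (fun k => (b k).linearIndependent) (p + 1)) φ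
end
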